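/- arXiv:1909.13781 — 4 statements merged into one kernel-verified Lean document; each statement's English description precedes it below -/
import Mathlib

section
/- Let G be a group. Suppose that for every d ∈ ℕ there exists a function g from bit strings of length at most d to G such that g(v) = ⁅g(v·0), g(v·1)⁆ for all v of length < d, and g(ε) ≠ 1. Then G is not solvable. -/
/-!
Labels at depth `d - k` of a depth-`d` commutator tree lie in the `k`-th derived subgroup, so the
root label lies in `derivedSeries G d`. If `G` is solvable this subgroup is trivial for some `d`,
contradicting `g [] ≠ 1` for the tree of that depth.
-/

section

variable {G : Type*} [Group G]

open scoped commutatorElement in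
theorem inv_mul_inv_mul_mul_mem_derivedSeries_succ {k : ℕ} {x y : G}
    (hx : x ∈ derivedSeries G k) (hy : y ∈ derivedSeries G k) :
    x⁻¹ * y⁻¹ * x * y ∈ derivedSeries G (k + 1) := by
  have hxy : x⁻¹ * y⁻¹ * x * y = ⁅x⁻¹, y⁻¹⁆ := by
    rw [commutatorElement_def, inv_inv, inv_inv]
  rw [hxy, derivedSeries_succ]
  exact Subgroup.commutator_mem_commutator (inv_mem hx) (inv_mem hy)

theorem mem_derivedSeries_of_commutator_tree {g : List Bool → G} {d : ℕ}
    (hg : ∀ v : List Bool, v.length < d →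
      g v = (g (v ++ [false]))⁻¹ * (g (v ++ [true]))⁻¹ * g (v ++ [false]) * g (v ++ [true]))
    (k : ℕ) {v : List Bool} (hv : v.length + k ≤ d) : g v ∈ derivedSeries G k := by
  induction k generalizing v with
  | zero => exact Subgroup.mem_top _
  | succ k ih =>
    rw [hg v (by omega)]
    exact inv_mul_inv_mul_mul_mem_derivedSeries_succ
      (ih (by simp only [List.length_append, List.length_singleton]; omega))
      (ih (by simp only [List.length_append, List.length_singleton]; omega))

end

/-- If for every `d` there is a labelling `g` of bit strings of length at most `d` by
elements of `G` with `g v = ⁅g (v·0), g (v·1)⁆` for `|v| < d` and `g ε ≠ 1`, then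
`G` is not solvable. -/
theorem stmt_3 (G : Type*) [Group G]
    (h : ∀ d : ℕ, ∃ g : List Bool → G,
      (∀ v : List Bool, v.length < d →
        g v = (g (v ++ [false]))⁻¹ * (g (v ++ [true]))⁻¹ * g (v ++ [false]) * g (v ++ [true])) ∧
      g [] ≠ 1) :
    ¬ IsSolvable G := by
  rintro ⟨d, hd⟩
  obtain ⟨g, hg, hroot⟩ := h d
  have hmem : g [] ∈ derivedSeries G d := mem_derivedSeries_of_commutator_tree hg d (by simp)
  rw [hd] at hmem
  exact hroot (Subgroup.mem_bot.mp hmem)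
end

section
/- Let G be a group, N a normal subgroup of G such that N is solvable of derived length δ (i.e. the δ-th derived subgroup of N is trivial). Let d ∈ ℕ and let g be a function from bit strings of length at most d + δ to G satisfying g(v) = ⁅g(v·0), g(v·1)⁆ for all v of length < d + δ and g(ε) ≠ 1. Then there exists a bit string u of length δ such that g(u) ∉ N. -/
/-!
If every leaf at depth `δ` lay in `N`, then by induction on the height a node `k` levels above the
leaves would lie in the `k`-th derived subgroup of `N`, since the hypothesis writes each node as the
commutator of the inverses of its children. The root would then lie in `derivedSeries N δ = ⊥`.
-/

open scoped commutatorElement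

theorem mem_map_derivedSeries_of_commutator_tree {G : Type*} [Group G] (H : Subgroup G)
    (g : List Bool → G) (L : ℕ)
    (hg : ∀ v : List Bool, v.length < L → g v = ⁅(g (v ++ [false]))⁻¹, (g (v ++ [true]))⁻¹⁆)
    (hleaf : ∀ u : List Bool, u.length = L → g u ∈ H) (k : ℕ) :
    ∀ v : List Bool, v.length + k = L → g v ∈ (derivedSeries H k).map H.subtype := by
  induction k with
  | zero =>
    intro v hv
    simpa [← MonoidHom.range_eq_map] using hleaf v hv
  | succ k ih =>
    intro v hv
    have hchild : ∀ b : Bool, g (v ++ [b]) ∈ (derivedSeries H k).map H.subtype := fun b =>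
      ih _ (by simp only [List.length_append, List.length_singleton]; omega)
    rw [hg v (by omega), derivedSeries_succ, Subgroup.map_commutator]
    exact Subgroup.commutator_mem_commutator (inv_mem (hchild false)) (inv_mem (hchild true))

theorem stmt_4_general (G : Type*) [Group G] (N : Subgroup G) (δ : ℕ)
    (hN : derivedSeries N δ = ⊥) (d : ℕ) (g : List Bool → G)
    (hg : ∀ v : List Bool, v.length < d + δ →
      g v = (g (v ++ [false]))⁻¹ * (g (v ++ [true]))⁻¹ * g (v ++ [false]) * g (v ++ [true]))
    (hne : g [] ≠ 1) :
    ∃ u : List Bool, u.length = δ ∧ g u ∉ N := by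
  by_contra! hleaf
  have hcomm : ∀ v : List Bool, v.length < δ →
      g v = ⁅(g (v ++ [false]))⁻¹, (g (v ++ [true]))⁻¹⁆ := fun v hv => by
    rw [hg v (by omega), commutatorElement_def, inv_inv, inv_inv]
  have hroot := mem_map_derivedSeries_of_commutator_tree N g δ hcomm hleaf δ [] (by simp)
  rw [hN, Subgroup.map_bot, Subgroup.mem_bot] at hroot
  exact hne hroot

/-- Let `N ⊴ G` be solvable of derived length `δ` (i.e. `derivedSeries N δ = ⊥`).
If `g` labels bit strings of length at most `d + δ` with `g v = ⁅g (v·0), g (v·1)⁆`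
for `|v| < d + δ` and `g ε ≠ 1`, then some `u` of length `δ` satisfies `g u ∉ N`. -/
theorem stmt_4 (G : Type*) [Group G] (N : Subgroup G) [N.Normal] (δ : ℕ)
    (hN : derivedSeries N δ = ⊥) (d : ℕ) (g : List Bool → G)
    (hg : ∀ v : List Bool, v.length < d + δ →
      g v = (g (v ++ [false]))⁻¹ * (g (v ++ [true]))⁻¹ * g (v ++ [false]) * g (v ++ [true]))
    (hne : g [] ≠ 1) :
    ∃ u : List Bool, u.length = δ ∧ g u ∉ N :=
  stmt_4_general G N δ hN d g hg hne
end

section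
/- Let k, c ∈ ℕ with c ≥ 1 and let s : Fin k → ℕ satisfy s(i) ≥ (∑_{j > i} s(j)) + c for all i. Then for any two distinct subsets A, B of Fin k, the subset sums differ by at least c: |∑_{i∈A} s(i) − ∑_{i∈B} s(i)| ≥ c. -/
/-!
Let `i` be the least index at which `A` and `B` differ, say `i ∈ A \ B`. Then `∑_A s - ∑_B s`
equals `∑_{A \ B} s - ∑_{B \ A} s`, where the first sum contains `s i` and the second only
involves indices above `i`; the super-decreasing condition `∑_{j > i} s j + c ≤ s i` gives the
gap `c`.
-/

open Finset
open scoped symmDiff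

section SuperDecreasing

variable {ι M : Type*} [LinearOrder ι] [Fintype ι]
  [AddCommGroup M] [LinearOrder M] [IsOrderedAddMonoid M]
  {s : ι → M} {c : M}

theorem le_sum_sub_sum_of_forall_symmDiff_le (hs₀ : ∀ i, 0 ≤ s i)
    (hs : ∀ i, ∑ j ∈ univ.filter (fun j => i < j), s j + c ≤ s i)
    {A B : Finset ι} {i : ι} (hiA : i ∈ A) (hiB : i ∉ B) (hmin : ∀ j ∈ A ∆ B, i ≤ j) :
    c ≤ ∑ j ∈ A, s j - ∑ j ∈ B, s j := by
  have hBA_above : B \ A ⊆ univ.filter (fun j => i < j) := fun j hj =>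
    mem_filter.2 ⟨mem_univ j, (hmin j (symmDiff_subset_sdiff' hj)).lt_of_ne
      (by rintro rfl; exact (mem_sdiff.1 hj).2 hiA)⟩
  rw [← sum_sdiff_sub_sum_sdiff]
  calc c ≤ s i - ∑ j ∈ univ.filter (fun j => i < j), s j := le_sub_iff_add_le'.2 (hs i)
    _ ≤ ∑ j ∈ A \ B, s j - ∑ j ∈ B \ A, s j :=
      sub_le_sub (single_le_sum (fun j _ => hs₀ j) (mem_sdiff.2 ⟨hiA, hiB⟩))
        (sum_le_sum_of_subset_of_nonneg hBA_above fun j _ _ => hs₀ j)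

theorem le_abs_sum_sub_sum_of_ne (hs₀ : ∀ i, 0 ≤ s i)
    (hs : ∀ i, ∑ j ∈ univ.filter (fun j => i < j), s j + c ≤ s i)
    {A B : Finset ι} (hAB : A ≠ B) :
    c ≤ |∑ j ∈ A, s j - ∑ j ∈ B, s j| := by
  obtain ⟨i, hi, hmin⟩ : ∃ i ∈ A ∆ B, ∀ j ∈ A ∆ B, i ≤ j :=
    ⟨_, min'_mem _ (symmDiff_nonempty.2 hAB), fun j => min'_le _ j⟩
  rcases mem_symmDiff.1 hi with ⟨hiA, hiB⟩ | ⟨hiB, hiA⟩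
  · exact (le_sum_sub_sum_of_forall_symmDiff_le hs₀ hs hiA hiB hmin).trans (le_abs_self _)
  · rw [symmDiff_comm] at hmin
    rw [abs_sub_comm]
    exact (le_sum_sub_sum_of_forall_symmDiff_le hs₀ hs hiB hiA hmin).trans (le_abs_self _)

end SuperDecreasing

theorem stmt_7_general (k c : ℕ) (s : Fin k → ℕ)
    (hs : ∀ i : Fin k, (∑ j ∈ Finset.univ.filter (fun j => i < j), s j) + c ≤ s i)
    (A B : Finset (Fin k)) (hAB : A ≠ B) :
    (c : ℤ) ≤ |(∑ i ∈ A, (s i : ℤ)) - ∑ i ∈ B, (s i : ℤ)| :=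
  le_abs_sum_sub_sum_of_ne (fun i => Int.natCast_nonneg (s i)) (fun i => mod_cast hs i) hAB

/-- If `s : Fin k → ℕ` satisfies `s i ≥ (∑_{j > i} s j) + c` with `c ≥ 1`, then the
subset sums of any two distinct subsets differ by at least `c`. -/
theorem stmt_7 (k c : ℕ) (hc : 1 ≤ c) (s : Fin k → ℕ)
    (hs : ∀ i : Fin k, (∑ j ∈ Finset.univ.filter (fun j => i < j), s j) + c ≤ s i)
    (A B : Finset (Fin k)) (hAB : A ≠ B) :
    (c : ℤ) ≤ |(∑ i ∈ A, (s i : ℤ)) - ∑ i ∈ B, (s i : ℤ)| :=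
  stmt_7_general k c s hs A B hAB
end

section
/- Let G be a group such that the wreath product G ≀ (ℤ/2) embeds into G (i.e. there is an injective group homomorphism (ZMod 2 → G) ⋊ ZMod 2 → G, where ZMod 2 acts by translating the argument). Then G ≀ (ℤ/4) also embeds into G. -/
/-- The translation automorphism `f ↦ (y ↦ f (y + c))` of the pointwise group `C → G`. -/
def shiftEquiv (G : Type) [Group G] {C : Type} [AddCommGroup C] (c : C) :
    (C → G) ≃* (C → G) where
  toFun f := fun y => f (y + c)
  invFun f := fun y => f (y - c)
  left_inv f := by funext y; simp
  right_inv f := by funext y; simp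
  map_mul' f g := rfl

/-- The action of `C` on `C → G` by translation of the argument. -/
def shiftHom (G : Type) [Group G] (C : Type) [AddCommGroup C] :
    Multiplicative C →* MulAut (C → G) where
  toFun c := shiftEquiv G c.toAdd
  map_one' := by
    ext f y
    simp [shiftEquiv]
  map_mul' a b := by
    ext f y
    simp [shiftEquiv, add_assoc]

/-- The regular wreath product `G ≀ C` for an additive group `C`, realized as the
semidirect product `(C → G) ⋊ C` where `C` translates the argument; the multiplication
is `(f₁, h₁)(f₂, h₂) = (y ↦ f₁ y * f₂ (y + h₁), h₁ + h₂)`. -/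
def Wr (G : Type) [Group G] (C : Type) [AddCommGroup C] : Type :=
  SemidirectProduct (C → G) (Multiplicative C) (shiftHom G C)

instance (G : Type) [Group G] (C : Type) [AddCommGroup C] : Group (Wr G C) :=
  inferInstanceAs (Group (SemidirectProduct (C → G) (Multiplicative C) (shiftHom G C)))

/-!
Write the elements of ℤ/4 in binary, `a + 2b` with digits `a b : ℤ/2`. Then a function
`ℤ/4 → G` is a function `ℤ/2 → (ℤ/2 → G)`, i.e. an element of the base group of
`(G ≀ ℤ/2) ≀ ℤ/2`, and translation by `1` on `ℤ/4` becomes conjugation by the odometer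
`τ = (δ₁, 1) ∈ ℤ/2 ≀ ℤ/2 ≤ (G ≀ ℤ/2) ≀ ℤ/2`: it flips the low digit and carries into the high
digit exactly when the low digit is `1`. The odometer has order 4, so this defines an embedding
`G ≀ ℤ/4 ↪ (G ≀ ℤ/2) ≀ ℤ/2`; it is injective because the projection `G ≀ ℤ/2 → ℤ/2` kills the
base part and is faithful on the powers of `τ`. Composing with `φ ≀ ℤ/2` and then `φ` for the
given embedding `φ : G ≀ ℤ/2 ↪ G` embeds `G ≀ ℤ/4` into `G`.
-/

open SemidirectProduct Function

namespace SemidirectProduct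

variable {N G H K : Type*} [Group N] [Group G] [Group H] [Group K] {φ : G →* MulAut N}

theorem lift_injective_of_comp {fn : N →* H} {fg : G →* H}
    {h : ∀ g, fn.comp (φ g).toMonoidHom = (MulAut.conj (fg g)).toMonoidHom.comp fn}
    (hfn : Injective fn) (π : H →* K) (hπn : ∀ n, π (fn n) = 1) (hπg : Injective (π.comp fg)) :
    Injective (lift fn fg h) := by
  rw [injective_iff_map_eq_one]
  rintro ⟨n, g⟩ hx
  change fn n * fg g = 1 at hx
  have hg : g = 1 := hπg <| by simpa [hπn] using congrArg π hx
  subst hg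
  have hn : n = 1 := hfn <| by simpa using hx
  subst hn
  rfl

end SemidirectProduct

theorem MulAut.semiconj_pow {N H : Type*} [Group N] [Group H] {f : N →* H} {σ : MulAut N}
    {τ : MulAut H} (h : Semiconj f σ τ) (k : ℕ) : Semiconj f ⇑(σ ^ k) ⇑(τ ^ k) := by
  induction k with
  | zero => exact Semiconj.id_right
  | succ k ih => simpa only [pow_succ, MulAut.coe_mul] using ih.comp_right h

section CyclicSource

variable {H : Type*} [Group H] {n : ℕ} [NeZero n]

theorem Multiplicative.ofAdd_one_pow_val (d : Multiplicative (ZMod n)) :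
    Multiplicative.ofAdd 1 ^ d.toAdd.val = d := by
  rw [← ofAdd_nsmul, nsmul_one, ZMod.natCast_zmod_val, ofAdd_toAdd]

def zmodPowHom (t : H) (ht : t ^ n = 1) : Multiplicative (ZMod n) →* H where
  toFun d := t ^ d.toAdd.val
  map_one' := by simp
  map_mul' a b := by
    rw [toAdd_mul, ZMod.val_add, ← pow_eq_pow_mod _ ht, pow_add]

variable (t : H) (ht : t ^ n = 1)

theorem zmodPowHom_ofAdd_one : zmodPowHom t ht (Multiplicative.ofAdd 1) = t := by
  change t ^ (1 : ZMod n).val = t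
  rw [ZMod.val_one_eq_one_mod, ← pow_eq_pow_mod _ ht, pow_one]

theorem zmodPowHom_injective (hord : orderOf t = n) : Injective (zmodPowHom t ht) := by
  rw [injective_iff_map_eq_one]
  intro d hd
  have hdvd : orderOf t ∣ d.toAdd.val := orderOf_dvd_of_pow_eq_one hd
  rw [hord] at hdvd
  have hval : d.toAdd.val = 0 := Nat.eq_zero_of_dvd_of_lt hdvd (ZMod.val_lt _)
  rwa [ZMod.val_eq_zero] at hval

theorem SemidirectProduct.lift_compat_of_generator {N : Type*} [Group N]
    {φ : Multiplicative (ZMod n) →* MulAut N} (fn : N →* H) (fg : Multiplicative (ZMod n) →* H)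
    (h : ∀ x, fn (φ (.ofAdd 1) x) = fg (.ofAdd 1) * fn x * (fg (.ofAdd 1))⁻¹)
    (d : Multiplicative (ZMod n)) :
    fn.comp (φ d).toMonoidHom = (MulAut.conj (fg d)).toMonoidHom.comp fn := by
  ext x
  rw [← d.ofAdd_one_pow_val, map_pow, map_pow, map_pow]
  exact MulAut.semiconj_pow (τ := MulAut.conj (fg (.ofAdd 1))) h _ x

end CyclicSource

namespace Wr

variable {G G' : Type} [Group G] [Group G'] {C : Type} [AddCommGroup C]

-- Projections typed by `Wr` itself, so that field notation and `simp` never see through `Wr`.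
def left (x : Wr G C) : C → G := SemidirectProduct.left x

def right (x : Wr G C) : Multiplicative C := SemidirectProduct.right x

@[ext]
theorem ext {x y : Wr G C} (hl : x.left = y.left) (hr : x.right = y.right) : x = y :=
  SemidirectProduct.ext hl hr

@[simp]
theorem mul_left (x y : Wr G C) :
    (x * y).left = fun c => x.left c * y.left (c + x.right.toAdd) := rfl

@[simp]
theorem mul_right (x y : Wr G C) : (x * y).right = x.right * y.right := rfl

def inl : (C → G) →* Wr G C := SemidirectProduct.inl

def inr : Multiplicative C →* Wr G C := SemidirectProduct.inr

def rightHom : Wr G C →* Multiplicative C := SemidirectProduct.rightHom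

@[simp]
theorem inl_left (f : C → G) : (inl f).left = f := rfl

@[simp]
theorem inl_right (f : C → G) : (inl f).right = 1 := rfl

@[simp]
theorem inr_left (c : Multiplicative C) : (inr c : Wr G C).left = 1 := rfl

@[simp]
theorem inr_right (c : Multiplicative C) : (inr c : Wr G C).right = c := rfl

theorem inl_injective : Injective (inl : (C → G) →* Wr G C) := SemidirectProduct.inl_injective

def map (φ : G →* G') : Wr G C →* Wr G' C :=
  SemidirectProduct.map (φ.compLeft C) (MonoidHom.id _) fun _ => rfl

@[simp]
theorem map_left (φ : G →* G') (x : Wr G C) : (map φ x).left = φ ∘ x.left := rfl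

@[simp]
theorem map_right (φ : G →* G') (x : Wr G C) : (map φ x).right = x.right := rfl

theorem map_injective {φ : G →* G'} (hφ : Injective φ) : Injective (map (C := C) φ) :=
  fun _ _ hxy => ext (hφ.comp_left (congrArg left hxy)) (congrArg right hxy :)

end Wr

def odometer : Wr (Multiplicative (ZMod 2)) (ZMod 2) := ⟨Pi.mulSingle 1 (.ofAdd 1), .ofAdd 1⟩

theorem orderOf_odometer : orderOf odometer = 4 := by
  have hsq : odometer ^ 2 = ⟨fun _ => .ofAdd 1, 1⟩ := by
    ext a
    · fin_cases a <;> rfl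
    · rfl
  refine orderOf_eq_prime_pow (p := 2) (n := 1) ?_ ?_
  · rw [pow_one, hsq]
    intro h
    exact absurd (congrArg (fun x => x.left 0) h) (by decide)
  · rw [pow_succ, pow_one, pow_mul, hsq]
    ext a
    · fin_cases a <;> rfl
    · rfl

section Embedding

variable (G : Type) [Group G]

def binaryDigits : (ZMod 4 → G) →* (ZMod 2 → ZMod 2 → G) where
  toFun g a b := g (a.val + 2 * b.val)
  map_one' := rfl
  map_mul' _ _ := rfl

theorem binaryDigits_injective : Injective (binaryDigits G) := by
  intro g g' h
  funext y
  obtain ⟨a, b, rfl⟩ : ∃ a b : ZMod 2, (a.val + 2 * b.val : ZMod 4) = y := by revert y; decide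
  exact congrFun (congrFun h a) b

def baseEmbedding : (ZMod 4 → G) →* Wr (Wr G (ZMod 2)) (ZMod 2) :=
  Wr.inl.comp ((Wr.inl.compLeft (ZMod 2)).comp (binaryDigits G))

theorem baseEmbedding_injective : Injective (baseEmbedding G) :=
  Wr.inl_injective.comp (Wr.inl_injective.comp_left.comp (binaryDigits_injective G))

@[simp]
theorem baseEmbedding_left (g : ZMod 4 → G) (a : ZMod 2) :
    (baseEmbedding G g).left a = Wr.inl fun b => g (a.val + 2 * b.val) := rfl

@[simp]
theorem baseEmbedding_right (g : ZMod 4 → G) : (baseEmbedding G g).right = 1 := rfl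

def odometerHom : Multiplicative (ZMod 4) →* Wr (Multiplicative (ZMod 2)) (ZMod 2) :=
  zmodPowHom odometer (orderOf_odometer ▸ pow_orderOf_eq_one odometer)

def odometerEmbedding : Multiplicative (ZMod 4) →* Wr (Wr G (ZMod 2)) (ZMod 2) :=
  (Wr.map Wr.inr).comp odometerHom

theorem odometerEmbedding_ofAdd_one :
    odometerEmbedding G (.ofAdd 1) = Wr.map Wr.inr odometer :=
  congrArg (Wr.map (Wr.inr : _ →* Wr G (ZMod 2))) (zmodPowHom_ofAdd_one _ _)

theorem baseEmbedding_shift (g : ZMod 4 → G) :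
    baseEmbedding G (shiftHom G (ZMod 4) (.ofAdd 1) g) =
      odometerEmbedding G (.ofAdd 1) * baseEmbedding G g * (odometerEmbedding G (.ofAdd 1))⁻¹ := by
  rw [eq_mul_inv_iff_mul_eq, odometerEmbedding_ofAdd_one]
  refine Wr.ext (funext fun a => Wr.ext (funext fun b => ?_) ?_) rfl
  all_goals obtain rfl | rfl : a = 0 ∨ a = 1 := by revert a; decide
  all_goals try obtain rfl | rfl : b = 0 ∨ b = 1 := by revert b; decide
  all_goals simp only [Wr.mul_left, Wr.mul_right, Wr.map_left, Wr.map_right, Wr.inl_left,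
    Wr.inl_right, Wr.inr_left, Wr.inr_right, baseEmbedding_left, baseEmbedding_right, comp_apply,
    Pi.one_apply, one_mul, mul_one]
  all_goals first | decide | exact congrArg g (by decide)

end Embedding

def wrZModFourEmbedding (G : Type) [Group G] : Wr G (ZMod 4) →* Wr (Wr G (ZMod 2)) (ZMod 2) :=
  SemidirectProduct.lift (baseEmbedding G) (odometerEmbedding G)
    (lift_compat_of_generator _ _ (baseEmbedding_shift G))

theorem wrZModFourEmbedding_injective (G : Type) [Group G] :
    Injective (wrZModFourEmbedding G) := by
  refine lift_injective_of_comp (baseEmbedding_injective G) (Wr.map Wr.rightHom) ?_ ?_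
  · intro g
    ext a <;> rfl
  · have hcomp : (Wr.map Wr.rightHom).comp (odometerEmbedding G) = odometerHom :=
      MonoidHom.ext fun _ => Wr.ext rfl rfl
    rw [hcomp]
    exact zmodPowHom_injective _ _ orderOf_odometer

/-- If the wreath product `G ≀ (ℤ/2)` embeds into `G`, then so does `G ≀ (ℤ/4)`. -/
theorem stmt_10 (G : Type) [Group G]
    (h : ∃ φ : Wr G (ZMod 2) →* G, Function.Injective φ) :
    ∃ ψ : Wr G (ZMod 4) →* G, Function.Injective ψ := by
  obtain ⟨φ, hφ⟩ := h
  exact ⟨φ.comp ((Wr.map φ).comp (wrZModFourEmbedding G)),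
    hφ.comp ((Wr.map_injective hφ).comp (wrZModFourEmbedding_injective G))⟩
end
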